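/- Leap days recur exactly every 1461 days from the epoch (2000, 3, 1) within the bounds (1900, 3, 1) to (2100, 2, 28): for every valid date D = (y, m, d) with (1900, 3, 1) ≤ D ≤ (2100, 2, 28), we have m = 2 and d = 29 if and only if toΔ(D) ≡ 1460 (mod 1461). -/

import Mathlib

/-- A date is a triple of integers (year, month, day). -/
structure Date where
  y : ℤ
  m : ℤ
  d : ℤ

/-- A year is a leap year iff divisible by 4 and (not by 100, or by 400). -/
def isLeap (y : ℤ) : Prop :=
  y % 4 = 0 ∧ (y % 100 ≠ 0 ∨ y % 400 = 0)

/-- Number of days in month `m` of year `y`. -/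
def nbdays (y m : ℤ) : ℤ :=
  if m = 4 ∨ m = 6 ∨ m = 9 ∨ m = 11 then 30
  else if m = 2 then
    (if y % 4 = 0 ∧ (y % 100 ≠ 0 ∨ y % 400 = 0) then 29 else 28)
  else 31

/-- A date is valid iff `1 ≤ m ≤ 12` and `1 ≤ d ≤ nbdays y m`. -/
def Date.valid (D : Date) : Prop :=
  1 ≤ D.m ∧ D.m ≤ 12 ∧ 1 ≤ D.d ∧ D.d ≤ nbdays D.y D.m

/-- Month addition `(y, m, d) +m n`, with round-down of the day component. -/
def addMonths (D : Date) (n : ℤ) : Date :=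
  ⟨D.y + (D.m - 1 + n) / 12,
   1 + (D.m - 1 + n) % 12,
   min D.d (nbdays (D.y + (D.m - 1 + n) / 12) (1 + (D.m - 1 + n) % 12))⟩

/-- A configuration of the small-step day-addition machine:
either a pending addition `D +D n`, or a finished date. -/
inductive Conf where
  | pending (D : Date) (n : ℤ)
  | done (D : Date)

/-- Small-step rules for day addition `+D`. -/
inductive Step : Conf → Conf → Prop where
  | add_days {y m d n : ℤ}
      (h1 : 1 ≤ d + n) (h2 : d + n ≤ nbdays y m) :
      Step (Conf.pending ⟨y, m, d⟩ n) (Conf.done ⟨y, m, d + n⟩)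
  | add_days_over {y m d n : ℤ}
      (h : d + n > nbdays y m) :
      Step (Conf.pending ⟨y, m, d⟩ n)
        (Conf.pending (addMonths ⟨y, m, 1⟩ 1) (n - (nbdays y m - d) - 1))
  | add_days_under1 {y m d n : ℤ}
      (h1 : 1 < d) (h2 : d + n ≤ 0) :
      Step (Conf.pending ⟨y, m, d⟩ n) (Conf.pending ⟨y, m, 1⟩ (d - 1 + n))
  | add_days_under2 {y m n y' m' : ℤ}
      (h1 : 1 + n ≤ 0) (h2 : addMonths ⟨y, m, 1⟩ (-1) = ⟨y', m', 1⟩) :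
      Step (Conf.pending ⟨y, m, 1⟩ n) (Conf.pending ⟨y', m', 1⟩ (n + nbdays y' m'))

/-- Reduction in finitely many steps. -/
def Reduces : Conf → Conf → Prop := Relation.ReflTransGen Step

instance : Nonempty Date := ⟨⟨2000, 3, 1⟩⟩

/-- `addDays D n` is the unique valid normal form of `D +D n`
(when it exists; arbitrary otherwise). -/
noncomputable def addDays (D : Date) (n : ℤ) : Date :=
  Classical.epsilon fun D' : Date =>
    D'.valid ∧ Reduces (Conf.pending D n) (Conf.done D')

/-- Date-period addition `D +P (ny, nm, nd) = (D +m (12·ny + nm)) +D nd`. -/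
noncomputable def addPeriod (D : Date) (P : ℤ × ℤ × ℤ) : Date :=
  addDays (addMonths D (12 * P.1 + P.2.1)) P.2.2

/-- Lexicographic order on dates. -/
def Date.le (a b : Date) : Prop :=
  a.y < b.y ∨ (a.y = b.y ∧ a.m < b.m) ∨ (a.y = b.y ∧ a.m = b.m ∧ a.d ≤ b.d)

/-- Strict lexicographic order on dates. -/
def Date.lt (a b : Date) : Prop :=
  a.y < b.y ∨ (a.y = b.y ∧ a.m < b.m) ∨ (a.y = b.y ∧ a.m = b.m ∧ a.d < b.d)

/-- The epoch date: March 1, 2000. -/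
def epoch : Date := ⟨2000, 3, 1⟩

/-- `toDelta D` is the unique integer `n` with `epoch +D n = D`
(when it exists; arbitrary otherwise). -/
noncomputable def toDelta (D : Date) : ℤ :=
  Classical.epsilon fun n : ℤ => addDays epoch n = D

/-!
`toΔ` has a closed form. Counting years from March makes the leap day the last day of a year, and
`dayNumber` counts days from the epoch by whole March years (`365 Y + Y/4 - Y/100 + Y/400`) plus the
day of the March year. Every rule of the day-addition machine preserves `dayNumber D + n`, the
machine is deterministic and always terminates, and `dayNumber` is injective on valid dates; hence
`toΔ = dayNumber`. For the March years `1900, …, 2099` the century terms contribute a constant, so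
`dayNumber ≡ 365 (Y mod 4) + (day of the March year) (mod 1461)`; the right side is at most `1460`,
with equality exactly on February 29.
-/

theorem nbdays_mem_Icc (y m : ℤ) : nbdays y m ∈ Set.Icc 28 31 := by
  unfold nbdays; constructor <;> split_ifs <;> omega

theorem addMonths_day_one (y m n : ℤ) :
    addMonths ⟨y, m, 1⟩ n = ⟨y + (m - 1 + n) / 12, 1 + (m - 1 + n) % 12, 1⟩ := by
  have := nbdays_mem_Icc (y + (m - 1 + n) / 12) (1 + (m - 1 + n) % 12)
  simp only [addMonths, Date.mk.injEq, true_and]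
  exact min_eq_left (by linarith [this.1])

theorem Date.valid_mk {y m d : ℤ} :
    (Date.mk y m d).valid ↔ 1 ≤ m ∧ m ≤ 12 ∧ 1 ≤ d ∧ d ≤ nbdays y m :=
  Iff.rfl

theorem Date.valid_day_one {y m : ℤ} (h₁ : 1 ≤ m) (h₂ : m ≤ 12) : (Date.mk y m 1).valid :=
  ⟨h₁, h₂, le_rfl, by linarith [(nbdays_mem_Icc y m).1]⟩

theorem epoch_valid : epoch.valid := by
  norm_num [epoch, Date.valid, nbdays]

theorem Step.rightUnique : Relator.RightUnique Step := by
  intro c c₁ c₂ h₁ h₂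
  -- the side conditions of distinct rules are disjoint because `nbdays y m ≥ 28`
  cases h₁ <;> cases h₂ <;> first | rfl | omega | grind [nbdays_mem_Icc]

theorem Reduces.done_unique {c : Conf} {D₁ D₂ : Date} (h₁ : Reduces c (.done D₁))
    (h₂ : Reduces c (.done D₂)) : D₁ = D₂ := by
  have done_terminal {D : Date} {c' : Conf} (h : Reduces (.done D) c') : c' = .done D := by
    rcases h.cases_head with h | ⟨_, hs, _⟩
    · exact h.symm
    · nomatch hs
  rcases h₁.total_of_right_unique Step.rightUnique h₂ with h | h
  · exact (Conf.done.inj (done_terminal h)).symm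
  · exact Conf.done.inj (done_terminal h)

/-- Up to a constant, the number of days before March 1 of year `Y`. -/
def marchYearStart (Y : ℤ) : ℤ := 365 * Y + Y / 4 - Y / 100 + Y / 400

def marchYear (D : Date) : ℤ := D.y + (D.m - 3) / 12

/-- `(153 * M + 2) / 5` is the number of days in the first `M` months of a year starting in March. -/
def dayOfMarchYear (D : Date) : ℤ := (153 * ((D.m - 3) % 12) + 2) / 5 + D.d - 1

def dayNumber (D : Date) : ℤ :=
  marchYearStart (marchYear D) - marchYearStart 2000 + dayOfMarchYear D

theorem marchYearStart_mono : Monotone marchYearStart := by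
  intro a b h; unfold marchYearStart; omega

theorem dayNumber_epoch : dayNumber epoch = 0 := by
  norm_num [dayNumber, dayOfMarchYear, marchYear, epoch]

theorem dayNumber_mk (y m d : ℤ) : dayNumber ⟨y, m, d⟩ = dayNumber ⟨y, m, 1⟩ + d - 1 := by
  simp only [dayNumber, dayOfMarchYear, marchYear]; ring

theorem dayNumber_next_month {y m : ℤ} (h₁ : 1 ≤ m) (h₂ : m ≤ 12) :
    dayNumber ⟨y + m / 12, 1 + m % 12, 1⟩ = dayNumber ⟨y, m, 1⟩ + nbdays y m := by
  simp only [dayNumber, dayOfMarchYear, marchYear, marchYearStart, nbdays]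
  interval_cases m <;> norm_num <;> (try split_ifs) <;> omega

theorem dayNumber_prev_month {y m : ℤ} (h₁ : 1 ≤ m) (h₂ : m ≤ 12) :
    dayNumber ⟨y, m, 1⟩ = dayNumber ⟨y + (m - 2) / 12, 1 + (m - 2) % 12, 1⟩ +
      nbdays (y + (m - 2) / 12) (1 + (m - 2) % 12) := by
  have h := dayNumber_next_month (y := y + (m - 2) / 12) (m := 1 + (m - 2) % 12)
    (by omega) (by omega)
  rwa [show y + (m - 2) / 12 + (1 + (m - 2) % 12) / 12 = y by omega,
    show 1 + (1 + (m - 2) % 12) % 12 = m by omega] at h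

/-- A borrow from the previous month (`Step.add_days_under2`) can turn a negative count into one
of at most `30`, so negative counts are weighted above `31`. -/
def stepMeasure (n : ℤ) : ℕ := if 0 ≤ n then n.toNat else (31 - n).toNat

theorem Step.progress {D : Date} (hD : D.valid) (n : ℤ) :
    (∃ D', D'.valid ∧ Step (.pending D n) (.done D') ∧ dayNumber D' = dayNumber D + n) ∨
    (∃ D' n', D'.valid ∧ Step (.pending D n) (.pending D' n') ∧
      dayNumber D' + n' = dayNumber D + n ∧ stepMeasure n' < stepMeasure n) := by
  obtain ⟨y, m, d⟩ := D
  obtain ⟨hm₁, hm₂, hd₁, hd₂⟩ := Date.valid_mk.mp hD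
  have hday := dayNumber_mk y m d
  by_cases hover : nbdays y m < d + n
  · have hs := Step.add_days_over hover
    rw [addMonths_day_one, show m - 1 + 1 = m by ring] at hs
    refine .inr ⟨_, _, Date.valid_day_one (by omega) (by omega), hs, ?_, ?_⟩
    · rw [dayNumber_next_month hm₁ hm₂]; omega
    · simp only [stepMeasure]; split_ifs <;> omega
  by_cases hin : 1 ≤ d + n
  · refine .inl ⟨⟨y, m, d + n⟩, ⟨hm₁, hm₂, hin, not_lt.mp hover⟩,
      Step.add_days hin (not_lt.mp hover), ?_⟩
    rw [dayNumber_mk y m (d + n), hday]; ring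
  by_cases hd : 1 < d
  · refine .inr ⟨_, _, Date.valid_day_one hm₁ hm₂, Step.add_days_under1 hd (by omega),
      by omega, ?_⟩
    simp only [stepMeasure]; split_ifs <;> omega
  obtain rfl : d = 1 := by omega
  have hs := Step.add_days_under2 (n := n) (by omega) (addMonths_day_one y m (-1))
  rw [show m - 1 + -1 = m - 2 by ring] at hs
  have hnb := nbdays_mem_Icc (y + (m - 2) / 12) (1 + (m - 2) % 12)
  refine .inr ⟨_, _, Date.valid_day_one (by omega) (by omega), hs, ?_, ?_⟩
  · rw [dayNumber_prev_month hm₁ hm₂]; ring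
  · simp only [stepMeasure, Set.mem_Icc] at hnb ⊢; split_ifs <;> omega

theorem exists_reduces_done (n : ℤ) {D : Date} (hD : D.valid) :
    ∃ D', D'.valid ∧ Reduces (.pending D n) (.done D') ∧ dayNumber D' = dayNumber D + n := by
  induction hk : stepMeasure n using Nat.strong_induction_on generalizing D n with
  | _ k ih =>
    rcases Step.progress hD n with ⟨D', hD', hs, hv⟩ | ⟨D', n', hD', hs, hv, hlt⟩
    · exact ⟨D', hD', .single hs, hv⟩
    · obtain ⟨E, hE, hr, hvE⟩ := ih _ (hk ▸ hlt) n' hD' rfl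
      exact ⟨E, hE, .head hs hr, by rw [hvE, hv]⟩

theorem addDays_epoch_spec (n : ℤ) :
    (addDays epoch n).valid ∧ dayNumber (addDays epoch n) = n := by
  obtain ⟨D, hD, hr, hv⟩ := exists_reduces_done n epoch_valid
  have hspec := Classical.epsilon_spec (p := fun D' : Date =>
    D'.valid ∧ Reduces (Conf.pending epoch n) (Conf.done D')) ⟨D, hD, hr⟩
  obtain rfl : addDays epoch n = D := hspec.2.done_unique hr
  exact ⟨hD, by rw [hv, dayNumber_epoch, zero_add]⟩

theorem dayOfMarchYear_nonneg {D : Date} (hD : D.valid) : 0 ≤ dayOfMarchYear D := by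
  unfold dayOfMarchYear; have := hD.2.2.1; omega

theorem dayOfMarchYear_lt_next_month {D : Date} (hD : D.valid) :
    dayOfMarchYear D < (153 * ((D.m - 3) % 12 + 1) + 2) / 5 := by
  obtain ⟨y, m, d⟩ := D
  obtain ⟨hm₁, hm₂, -, hd⟩ := Date.valid_mk.mp hD
  simp only [dayOfMarchYear, nbdays] at hd ⊢
  interval_cases m <;> norm_num at hd ⊢ <;> (try split_ifs at hd) <;> omega

theorem dayOfMarchYear_lt_marchYearStart_succ_sub {D : Date} (hD : D.valid) :
    dayOfMarchYear D < marchYearStart (marchYear D + 1) - marchYearStart (marchYear D) := by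
  obtain ⟨y, m, d⟩ := D
  obtain ⟨hm₁, hm₂, -, hd⟩ := Date.valid_mk.mp hD
  simp only [dayOfMarchYear, marchYear, marchYearStart, nbdays] at hd ⊢
  interval_cases m <;> norm_num at hd ⊢ <;> (try split_ifs at hd) <;> omega

theorem dayOfMarchYear_le_365 {D : Date} (hD : D.valid) : dayOfMarchYear D ≤ 365 := by
  have h := dayOfMarchYear_lt_marchYearStart_succ_sub hD
  unfold marchYearStart at h
  omega

theorem eq_of_marchYearStart_add_eq {Y₁ Y₂ o₁ o₂ : ℤ}
    (h : marchYearStart Y₁ + o₁ = marchYearStart Y₂ + o₂)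
    (h₁ : o₁ ∈ Set.Ico 0 (marchYearStart (Y₁ + 1) - marchYearStart Y₁))
    (h₂ : o₂ ∈ Set.Ico 0 (marchYearStart (Y₂ + 1) - marchYearStart Y₂)) : Y₁ = Y₂ := by
  rcases lt_trichotomy Y₁ Y₂ with hlt | heq | hlt
  · linarith [marchYearStart_mono (show Y₁ + 1 ≤ Y₂ by omega), h₁.2, h₂.1]
  · exact heq
  · linarith [marchYearStart_mono (show Y₂ + 1 ≤ Y₁ by omega), h₁.1, h₂.2]

theorem eq_of_dayNumber_eq {D₁ D₂ : Date} (h₁ : D₁.valid) (h₂ : D₂.valid)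
    (h : dayNumber D₁ = dayNumber D₂) : D₁ = D₂ := by
  have hmonth₁ := dayOfMarchYear_lt_next_month h₁
  have hmonth₂ := dayOfMarchYear_lt_next_month h₂
  have hY : marchYear D₁ = marchYear D₂ := by
    refine eq_of_marchYearStart_add_eq (o₁ := dayOfMarchYear D₁) (o₂ := dayOfMarchYear D₂)
      (by unfold dayNumber at h; linarith)
      ⟨dayOfMarchYear_nonneg h₁, dayOfMarchYear_lt_marchYearStart_succ_sub h₁⟩
      ⟨dayOfMarchYear_nonneg h₂, dayOfMarchYear_lt_marchYearStart_succ_sub h₂⟩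
  have hoff : dayOfMarchYear D₁ = dayOfMarchYear D₂ := by
    unfold dayNumber at h; rw [hY] at h; linarith
  obtain ⟨y₁, m₁, d₁⟩ := D₁
  obtain ⟨y₂, m₂, d₂⟩ := D₂
  obtain ⟨hm₁, hm₁', hd₁, -⟩ := Date.valid_mk.mp h₁
  obtain ⟨hm₂, hm₂', hd₂, -⟩ := Date.valid_mk.mp h₂
  simp only [dayOfMarchYear, marchYear] at hY hoff hmonth₁ hmonth₂
  simp only [Date.mk.injEq]
  omega

theorem toDelta_eq_dayNumber {D : Date} (hD : D.valid) : toDelta D = dayNumber D := by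
  have hspec : addDays epoch (toDelta D) = D :=
    Classical.epsilon_spec (p := fun n => addDays epoch n = D)
      ⟨dayNumber D, eq_of_dayNumber_eq (addDays_epoch_spec _).1 hD (addDays_epoch_spec _).2⟩
  rw [← (addDays_epoch_spec (toDelta D)).2, hspec]

/-- For the March years `1900, …, 2099` the century corrections `Y / 100 - Y / 400` are constantly
`15`, so every four consecutive March years span `1461` days. -/
theorem dayNumber_emod_1461 {D : Date} (h₁ : 1900 ≤ marchYear D) (h₂ : marchYear D < 2100) :
    dayNumber D % 1461 = (365 * (marchYear D % 4) + dayOfMarchYear D) % 1461 := by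
  have hcentury : marchYear D / 100 - marchYear D / 400 = 15 := by omega
  simp only [dayNumber, marchYearStart]
  omega

theorem leap_day_iff_emod_1461 {D : Date} (hD : D.valid) :
    D.m = 2 ∧ D.d = 29 ↔ (365 * (marchYear D % 4) + dayOfMarchYear D) % 1461 = 1460 := by
  have hmonth := dayOfMarchYear_lt_next_month hD
  have hle := dayOfMarchYear_le_365 hD
  have hnonneg := dayOfMarchYear_nonneg hD
  obtain ⟨y, m, d⟩ := D
  obtain ⟨hm₁, hm₂, -, hd⟩ := Date.valid_mk.mp hD
  dsimp only at hmonth ⊢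
  constructor
  · rintro ⟨rfl, rfl⟩
    have hleap : y % 4 = 0 := by
      simp only [nbdays] at hd; norm_num at hd; split_ifs at hd <;> omega
    simp only [dayOfMarchYear, marchYear]
    omega
  · intro h
    have h365 : dayOfMarchYear ⟨y, m, d⟩ = 365 := by
      have := Int.emod_nonneg (marchYear ⟨y, m, d⟩) four_ne_zero
      have := Int.emod_lt_of_pos (marchYear ⟨y, m, d⟩) four_pos
      rw [Int.emod_eq_of_lt (by omega) (by omega)] at h
      omega
    simp only [dayOfMarchYear] at h365 hmonth
    omega

/-- **Leap days recur exactly every 1461 days from the epoch** within the bounds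
`(1900, 3, 1)` to `(2100, 2, 28)`: for every valid date `D = (y, m, d)` in these
bounds, `m = 2 ∧ d = 29` iff `toΔ(D) ≡ 1460 (mod 1461)`. -/
theorem leap_day_cycle (y m d : ℤ) (hv : (Date.mk y m d).valid)
    (hlb : Date.le ⟨1900, 3, 1⟩ ⟨y, m, d⟩)
    (hub : Date.le ⟨y, m, d⟩ ⟨2100, 2, 28⟩) :
    (m = 2 ∧ d = 29) ↔ toDelta ⟨y, m, d⟩ ≡ 1460 [ZMOD 1461] := by
  have hY : 1900 ≤ marchYear ⟨y, m, d⟩ ∧ marchYear ⟨y, m, d⟩ < 2100 := by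
    obtain ⟨hm₁, hm₂, -⟩ := Date.valid_mk.mp hv
    simp only [Date.le, marchYear] at hlb hub ⊢
    omega
  rw [Int.ModEq, toDelta_eq_dayNumber hv, dayNumber_emod_1461 hY.1 hY.2]
  exact leap_day_iff_emod_1461 hv
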